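/- arXiv:0911.1983 — 6 statements merged into one kernel-verified Lean document; each statement's English description precedes it below -/
import Mathlib

section
/- Let V₁, V₂ be closed subspaces of a Hilbert space with Friedrichs angle α. For any nonzero v₁ ∈ V₁ orthogonal to V₁ ∩ V₂, the norm of the projection of v₁ onto the orthogonal complement V₂^⊥ satisfies ‖P_{V₂^⊥}(v₁)‖ ≥ ‖v₁‖ · sin α. -/
open scoped RealInnerProductSpace

/-- The cosine of the Friedrichs angle between two subspaces. -/
noncomputable def friedrichsCos {H : Type*} [NormedAddCommGroup H] [InnerProductSpace ℝ H]
    (V₁ V₂ : Submodule ℝ H) : ℝ :=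
  sSup {r : ℝ | ∃ v₁ v₂ : H, v₁ ∈ V₁ ∧ v₂ ∈ V₂ ∧ ‖v₁‖ = 1 ∧ ‖v₂‖ = 1 ∧
    v₁ ∈ (V₁ ⊓ V₂)ᗮ ∧ v₂ ∈ (V₁ ⊓ V₂)ᗮ ∧ r = |⟪v₁, v₂⟫|}

/-! Write `P` for the orthogonal projection onto `V₂`. Both `v₁` and `P v₁` are orthogonal to
`V₁ ⊓ V₂`, so the definition of the Friedrichs angle bounds `‖P v₁‖² = ⟪v₁, P v₁⟫` by
`cos α ‖v₁‖ ‖P v₁‖`; by Pythagoras, `‖v₁ - P v₁‖² = ‖v₁‖² - ‖P v₁‖² ≥ sin² α ‖v₁‖²`. -/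

section

variable {H : Type*} [NormedAddCommGroup H] [InnerProductSpace ℝ H]

theorem Submodule.starProjection_mem_orthogonal_of_le {W K : Submodule ℝ H}
    [K.HasOrthogonalProjection] (hWK : W ≤ K) {v : H} (hv : v ∈ Wᗮ) :
    K.starProjection v ∈ Wᗮ := by
  intro w hw
  rw [real_inner_comm, inner_starProjection_left_eq_right,
    starProjection_eq_self_iff.mpr (hWK hw), real_inner_comm]
  exact hv w hw

theorem friedrichsCos_nonneg (V₁ V₂ : Submodule ℝ H) : 0 ≤ friedrichsCos V₁ V₂ :=
  Real.sSup_nonneg fun _ ⟨_, _, _, _, _, _, _, _, hr⟩ => hr ▸ abs_nonneg _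

theorem abs_inner_le_friedrichsCos_mul {V₁ V₂ : Submodule ℝ H} {u w : H}
    (hu : u ∈ V₁) (hw : w ∈ V₂) (hu' : u ∈ (V₁ ⊓ V₂)ᗮ) (hw' : w ∈ (V₁ ⊓ V₂)ᗮ) :
    |⟪u, w⟫| ≤ friedrichsCos V₁ V₂ * (‖u‖ * ‖w‖) := by
  rcases eq_or_ne u 0 with rfl | hu0
  · simp
  rcases eq_or_ne w 0 with rfl | hw0
  · simp
  have hunit : |⟪‖u‖⁻¹ • u, ‖w‖⁻¹ • w⟫| ≤ friedrichsCos V₁ V₂ := by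
    refine le_csSup ⟨1, ?_⟩ ⟨_, _, V₁.smul_mem _ hu, V₂.smul_mem _ hw, norm_smul_inv_norm hu0,
      norm_smul_inv_norm hw0, Submodule.smul_mem _ _ hu', Submodule.smul_mem _ _ hw', rfl⟩
    rintro r ⟨u₁, u₂, -, -, hn₁, hn₂, -, -, rfl⟩
    simpa [hn₁, hn₂] using abs_real_inner_le_norm u₁ u₂
  rw [real_inner_smul_left, real_inner_smul_right, abs_mul, abs_mul, abs_inv, abs_inv, abs_norm,
    abs_norm, ← mul_assoc, ← mul_inv, inv_mul_le_iff₀ (by positivity)] at hunit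
  linarith

theorem norm_starProjection_le_friedrichsCos_mul {V₁ V₂ : Submodule ℝ H}
    [V₂.HasOrthogonalProjection] {v : H} (hv : v ∈ V₁) (hv' : v ∈ (V₁ ⊓ V₂)ᗮ) :
    ‖V₂.starProjection v‖ ≤ friedrichsCos V₁ V₂ * ‖v‖ := by
  set p := V₂.starProjection v
  have hinner : ⟪v, p⟫ = ‖p‖ ^ 2 := by
    rw [real_inner_comm]
    exact V₂.re_inner_starProjection_eq_normSq v
  have hbound := abs_inner_le_friedrichsCos_mul hv (V₂.starProjection_apply_mem v) hv'
    (Submodule.starProjection_mem_orthogonal_of_le inf_le_right hv')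
  rw [hinner, abs_sq, sq, ← mul_assoc] at hbound
  rcases (norm_nonneg p).eq_or_lt with hp | hp
  · rw [← hp]
    exact mul_nonneg (friedrichsCos_nonneg V₁ V₂) (norm_nonneg v)
  · exact le_of_mul_le_mul_right hbound hp

end

theorem norm_projection_complement_ge_sin_angle_general
    {H : Type*} [NormedAddCommGroup H] [InnerProductSpace ℝ H]
    (V₁ V₂ : Submodule ℝ H) [CompleteSpace V₂]
    (α : ℝ)
    (hcos : Real.cos α = friedrichsCos V₁ V₂)
    (v₁ : H) (hv₁ : v₁ ∈ V₁) (hperp : v₁ ∈ (V₁ ⊓ V₂)ᗮ) :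
    ‖v₁‖ * Real.sin α ≤ ‖(Submodule.orthogonalProjection V₂ᗮ v₁ : H)‖ := by
  have hproj : ‖V₂.starProjection v₁‖ ≤ Real.cos α * ‖v₁‖ :=
    hcos ▸ norm_starProjection_le_friedrichsCos_mul hv₁ hperp
  have hsq : (‖v₁‖ * Real.sin α) ^ 2 ≤ ‖V₂ᗮ.starProjection v₁‖ ^ 2 := by
    rw [mul_pow, Real.sin_sq]
    nlinarith [pow_le_pow_left₀ (norm_nonneg _) hproj 2,
      V₂.norm_sq_eq_add_norm_sq_starProjection v₁]
  exact (le_abs_self _).trans (abs_le_of_sq_le_sq hsq (norm_nonneg _))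

theorem norm_projection_complement_ge_sin_angle
    {H : Type*} [NormedAddCommGroup H] [InnerProductSpace ℝ H] [CompleteSpace H]
    (V₁ V₂ : Submodule ℝ H) (hV₁ : IsClosed (V₁ : Set H)) (hV₂ : IsClosed (V₂ : Set H)) [CompleteSpace V₂]
    (α : ℝ) (hα₀ : 0 ≤ α) (hα₁ : α ≤ Real.pi / 2)
    (hcos : Real.cos α = friedrichsCos V₁ V₂)
    (v₁ : H) (hv₁ : v₁ ∈ V₁) (hne : v₁ ≠ 0) (hperp : v₁ ∈ (V₁ ⊓ V₂)ᗮ) :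
    ‖v₁‖ * Real.sin α ≤ ‖(Submodule.orthogonalProjection V₂ᗮ v₁ : H)‖ :=
  norm_projection_complement_ge_sin_angle_general V₁ V₂ α hcos v₁ hv₁ hperp
end

section
/- If V₁ is a finite-dimensional subspace and V₂ a closed subspace of a Hilbert space, then the Friedrichs angle between V₁ and V₂ is strictly positive; i.e., cos ∠(V₁,V₂) < 1. -/
open scoped RealInnerProductSpace

/-!
Let `D = V₁ ⊓ V₂`. The unit vectors of the finite-dimensional space `V₁ ⊓ Dᗮ` form a compact set
disjoint from the closed subspace `V₂`, so they stay at distance at least some `δ > 0` from `V₂`.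
For unit vectors `u, v` the identity `‖u ∓ v‖² = 2 ∓ 2⟪u, v⟫` turns this into
`|⟪u, v⟫| ≤ 1 - δ² / 2` whenever `v ∈ V₂` is a unit vector, which bounds the Friedrichs cosine.
-/

theorem abs_real_inner_le_one_sub_of_le_norm_sub_of_le_norm_add {H : Type*}
    [NormedAddCommGroup H] [InnerProductSpace ℝ H] {u v : H} {δ : ℝ} (hδ : 0 ≤ δ)
    (hu : ‖u‖ = 1) (hv : ‖v‖ = 1) (hsub : δ ≤ ‖u - v‖) (hadd : δ ≤ ‖u + v‖) :
    |⟪u, v⟫| ≤ 1 - δ ^ 2 / 2 := by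
  have hsub_sq := norm_sub_sq_real u v
  have hadd_sq := norm_add_sq_real u v
  rw [hu, hv] at hsub_sq hadd_sq
  have hsub_sq_le := pow_le_pow_left₀ hδ hsub 2
  have hadd_sq_le := pow_le_pow_left₀ hδ hadd 2
  rw [abs_le]
  constructor <;> linarith

namespace Submodule

variable {H : Type*} [NormedAddCommGroup H] [InnerProductSpace ℝ H]

theorem isCompact_setOf_mem_and_norm_eq_one (U : Submodule ℝ H) [FiniteDimensional ℝ U] :
    IsCompact {u : H | u ∈ U ∧ ‖u‖ = 1} := by
  convert (isCompact_sphere (0 : U) 1).image continuous_subtype_val using 1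
  ext u
  constructor
  · rintro ⟨hu, hn⟩
    exact ⟨⟨u, hu⟩, mem_sphere_zero_iff_norm.2 hn, rfl⟩
  · rintro ⟨u, hn, rfl⟩
    exact ⟨u.2, mem_sphere_zero_iff_norm.1 hn⟩

theorem exists_pos_le_norm_sub_of_inf_eq_bot (U V : Submodule ℝ H) [FiniteDimensional ℝ U]
    (hV : IsClosed (V : Set H)) (hUV : U ⊓ V = ⊥) :
    ∃ δ > 0, ∀ u ∈ U, ‖u‖ = 1 → ∀ v ∈ V, δ ≤ ‖u - v‖ := by
  have hdisj : Disjoint {u : H | u ∈ U ∧ ‖u‖ = 1} V := by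
    refine Set.disjoint_left.2 fun u ⟨hu, hn⟩ hv => ?_
    have : u = 0 := (mem_bot ℝ).1 (hUV ▸ ⟨hu, hv⟩)
    simp [this] at hn
  obtain ⟨r, hr, hsep⟩ :=
    Metric.exists_pos_forall_lt_edist U.isCompact_setOf_mem_and_norm_eq_one hV hdisj
  refine ⟨r, hr, fun u hu hn v hv => ?_⟩
  have hlt := hsep u ⟨hu, hn⟩ v hv
  rw [edist_nndist, ENNReal.coe_lt_coe, ← NNReal.coe_lt_coe, coe_nndist, dist_eq_norm] at hlt
  exact hlt.le

theorem exists_abs_real_inner_le_lt_one_of_inf_eq_bot (U V : Submodule ℝ H)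
    [FiniteDimensional ℝ U] (hV : IsClosed (V : Set H)) (hUV : U ⊓ V = ⊥) :
    ∃ c < 1, ∀ u ∈ U, ∀ v ∈ V, ‖u‖ = 1 → ‖v‖ = 1 → |⟪u, v⟫| ≤ c := by
  obtain ⟨δ, hδ, hsep⟩ := exists_pos_le_norm_sub_of_inf_eq_bot U V hV hUV
  refine ⟨1 - δ ^ 2 / 2, by nlinarith, fun u hu v hv hun hvn => ?_⟩
  refine abs_real_inner_le_one_sub_of_le_norm_sub_of_le_norm_add hδ.le hun hvn
    (hsep u hu hun v hv) ?_
  simpa using hsep u hu hun (-v) (V.neg_mem hv)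

end Submodule

theorem friedrichsCos_lt_one_of_finiteDimensional_general
    {H : Type*} [NormedAddCommGroup H] [InnerProductSpace ℝ H]
    (V₁ V₂ : Submodule ℝ H) [FiniteDimensional ℝ V₁] (hV₂ : IsClosed (V₂ : Set H)) :
    friedrichsCos V₁ V₂ < 1 := by
  have hbot : V₁ ⊓ (V₁ ⊓ V₂)ᗮ ⊓ V₂ = ⊥ := by
    rw [inf_right_comm]
    exact Submodule.inf_orthogonal_eq_bot _
  obtain ⟨c, hc, hbound⟩ :=
    Submodule.exists_abs_real_inner_le_lt_one_of_inf_eq_bot _ V₂ hV₂ hbot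
  refine (Real.sSup_le ?_ (le_max_right c 0)).trans_lt (max_lt hc one_pos)
  rintro _ ⟨v₁, v₂, hv₁, hv₂, hn₁, hn₂, ho₁, -, rfl⟩
  exact (hbound v₁ ⟨hv₁, ho₁⟩ v₂ hv₂ hn₁ hn₂).trans (le_max_left c 0)

theorem friedrichsCos_lt_one_of_finiteDimensional
    {H : Type*} [NormedAddCommGroup H] [InnerProductSpace ℝ H] [CompleteSpace H]
    (V₁ V₂ : Submodule ℝ H) [FiniteDimensional ℝ V₁] (hV₂ : IsClosed (V₂ : Set H))
    (h12 : ¬ V₁ ≤ V₂) (h21 : ¬ V₂ ≤ V₁) :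
    friedrichsCos V₁ V₂ < 1 :=
  friedrichsCos_lt_one_of_finiteDimensional_general V₁ V₂ hV₂
end

section
/- For closed subspaces V₁, V₂ of a Hilbert space, the Friedrichs angle between the orthogonal complements V₁^⊥ and V₂^⊥ equals the Friedrichs angle between V₁ and V₂. -/
open scoped RealInnerProductSpace

/-! Write `c = cos ∠(M, N)`, `L = M ⊓ N` and `B = N ⊓ Lᗮ`. Let `u ∈ Mᗮ`, `v ∈ Nᗮ` be unit vectors
with `u ⊥ Mᗮ ⊓ Nᗮ`, so that `u` lies in the closure of `M ⊔ N`, and let `w` be the projection of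
`u` onto `B`. As `u ⊥ L`, it even lies in the closure of `(M ⊓ Lᗮ) ⊔ B`, and on `a + b` there
`⟪u, a + b⟫ = ⟪w, b⟫` while `‖a + b‖² ≥ (1 - c²) ‖b‖²`; testing this at `u` itself gives
`‖w‖² ≥ 1 - c²`. Since `w ∈ N ⊥ v`, `|⟪u, v⟫| = |⟪u - w, v⟫| ≤ ‖u - w‖ = √(1 - ‖w‖²) ≤ c`.
Hence `cos ∠(Mᗮ, Nᗮ) ≤ cos ∠(M, N)`, and applying this to `Mᗮ, Nᗮ` gives the reverse. -/

theorem Submodule.topologicalClosure_sup_inf_orthogonal_le {𝕜 E : Type*} [RCLike 𝕜]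
    [NormedAddCommGroup E] [InnerProductSpace 𝕜 E] {M N K : Submodule 𝕜 E}
    [K.HasOrthogonalProjection] (hKM : K ≤ M) (hKN : K ≤ N) :
    (M ⊔ N).topologicalClosure ⊓ Kᗮ ≤ (M ⊓ Kᗮ ⊔ N ⊓ Kᗮ).topologicalClosure := by
  rintro u ⟨hu, huK⟩
  have hproj {V : Submodule 𝕜 E} (hKV : K ≤ V) {x : E} (hx : x ∈ V) :
      Kᗮ.starProjection x ∈ V ⊓ Kᗮ :=
    ⟨by simpa using sub_mem hx (hKV (K.starProjection_apply_mem x)),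
      Kᗮ.starProjection_apply_mem x⟩
  have hmaps : Set.MapsTo Kᗮ.starProjection (M ⊔ N : Submodule 𝕜 E)
      (M ⊓ Kᗮ ⊔ N ⊓ Kᗮ : Submodule 𝕜 E) := by
    intro x hx
    obtain ⟨m, hm, n, hn, rfl⟩ := Submodule.mem_sup.1 hx
    rw [map_add]
    exact Submodule.add_mem_sup (hproj hKM hm) (hproj hKN hn)
  rw [← Kᗮ.starProjection_eq_self_iff.2 huK, ← SetLike.mem_coe, Submodule.topologicalClosure_coe]
  rw [Submodule.topologicalClosure_coe] at hu
  exact map_mem_closure (Kᗮ.starProjection).continuous hu hmaps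

section

variable {H : Type*} [NormedAddCommGroup H] [InnerProductSpace ℝ H]

theorem abs_real_inner_le_one {u v : H} (hu : ‖u‖ = 1) (hv : ‖v‖ = 1) : |⟪u, v⟫| ≤ 1 :=
  (abs_real_inner_le_norm u v).trans_eq (by rw [hu, hv, mul_one])

theorem one_sub_sq_mul_norm_sq_le_norm_add_sq {a b : H} {c : ℝ}
    (h : |⟪a, b⟫| ≤ c * (‖a‖ * ‖b‖)) : (1 - c ^ 2) * ‖b‖ ^ 2 ≤ ‖a + b‖ ^ 2 := by
  rw [norm_add_sq_real]
  nlinarith [neg_le_of_abs_le h, sq_nonneg (‖a‖ - c * ‖b‖)]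

theorem friedrichsCos_le_one (V₁ V₂ : Submodule ℝ H) : friedrichsCos V₁ V₂ ≤ 1 :=
  Real.sSup_le (fun _ ⟨_, _, _, _, h₁, h₂, _, _, hr⟩ => hr ▸ abs_real_inner_le_one h₁ h₂)
    zero_le_one

theorem abs_inner_le_friedrichsCos {V₁ V₂ : Submodule ℝ H} {v₁ v₂ : H} (h₁ : v₁ ∈ V₁)
    (h₂ : v₂ ∈ V₂) (hn₁ : ‖v₁‖ = 1) (hn₂ : ‖v₂‖ = 1) (ho₁ : v₁ ∈ (V₁ ⊓ V₂)ᗮ)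
    (ho₂ : v₂ ∈ (V₁ ⊓ V₂)ᗮ) : |⟪v₁, v₂⟫| ≤ friedrichsCos V₁ V₂ :=
  le_csSup ⟨1, fun _ ⟨_, _, _, _, h₁, h₂, _, _, hr⟩ => hr ▸ abs_real_inner_le_one h₁ h₂⟩
    ⟨v₁, v₂, h₁, h₂, hn₁, hn₂, ho₁, ho₂, rfl⟩

theorem abs_inner_le_friedrichsCos_mul_s4 {V₁ V₂ : Submodule ℝ H} {a b : H} (ha : a ∈ V₁)
    (hb : b ∈ V₂) (ha' : a ∈ (V₁ ⊓ V₂)ᗮ) (hb' : b ∈ (V₁ ⊓ V₂)ᗮ) :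
    |⟪a, b⟫| ≤ friedrichsCos V₁ V₂ * (‖a‖ * ‖b‖) := by
  rcases eq_or_ne a 0 with rfl | ha0
  · simp
  rcases eq_or_ne b 0 with rfl | hb0
  · simp
  have h := abs_inner_le_friedrichsCos (V₁.smul_mem ‖a‖⁻¹ ha) (V₂.smul_mem ‖b‖⁻¹ hb)
    (norm_smul_inv_norm ha0) (norm_smul_inv_norm hb0) (Submodule.smul_mem _ _ ha')
    (Submodule.smul_mem _ _ hb')
  rw [real_inner_smul_left, real_inner_smul_right, abs_mul, abs_mul, abs_inv, abs_inv, abs_norm,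
    abs_norm, ← mul_assoc, ← mul_inv, inv_mul_le_iff₀ (by positivity)] at h
  linarith

theorem one_sub_friedrichsCos_sq_mul_inner_sq_le {M N : Submodule ℝ H}
    [(N ⊓ (M ⊓ N)ᗮ).HasOrthogonalProjection] {u x : H} (hu : u ∈ Mᗮ)
    (hx : x ∈ M ⊓ (M ⊓ N)ᗮ ⊔ N ⊓ (M ⊓ N)ᗮ) :
    (1 - friedrichsCos M N ^ 2) * ⟪u, x⟫ ^ 2 ≤
      ‖(N ⊓ (M ⊓ N)ᗮ).starProjection u‖ ^ 2 * ‖x‖ ^ 2 := by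
  set B : Submodule ℝ H := N ⊓ (M ⊓ N)ᗮ
  set c := friedrichsCos M N
  obtain ⟨a, ⟨haM, haL⟩, b, hbB, rfl⟩ := Submodule.mem_sup.1 hx
  have hinner : ⟪u, a + b⟫ = ⟪B.starProjection u, b⟫ := by
    rw [inner_add_right, (Submodule.mem_orthogonal' M u).1 hu a haM, zero_add,
      B.inner_starProjection_left_eq_right, B.starProjection_eq_self_iff.2 hbB]
  have hc : 0 ≤ 1 - c ^ 2 := by nlinarith [friedrichsCos_nonneg M N, friedrichsCos_le_one M N]
  calc (1 - c ^ 2) * ⟪u, a + b⟫ ^ 2 ≤ (1 - c ^ 2) * (‖B.starProjection u‖ ^ 2 * ‖b‖ ^ 2) := by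
        rw [hinner, ← mul_pow, ← sq_abs ⟪B.starProjection u, b⟫]
        gcongr
        exact abs_real_inner_le_norm _ _
    _ = ‖B.starProjection u‖ ^ 2 * ((1 - c ^ 2) * ‖b‖ ^ 2) := by ring
    _ ≤ ‖B.starProjection u‖ ^ 2 * ‖a + b‖ ^ 2 := by
        gcongr
        exact one_sub_sq_mul_norm_sq_le_norm_add_sq
          (abs_inner_le_friedrichsCos_mul_s4 haM hbB.1 haL hbB.2)

variable [CompleteSpace H]

theorem one_sub_friedrichsCos_sq_le_norm_starProjection_sq {M N : Submodule ℝ H}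
    [(M ⊓ N).HasOrthogonalProjection] [(N ⊓ (M ⊓ N)ᗮ).HasOrthogonalProjection] {u : H}
    (hu : u ∈ Mᗮ) (hu1 : ‖u‖ = 1) (huE : u ∈ (Mᗮ ⊓ Nᗮ)ᗮ) :
    1 - friedrichsCos M N ^ 2 ≤ ‖(N ⊓ (M ⊓ N)ᗮ).starProjection u‖ ^ 2 := by
  have huL : u ∈ (M ⊓ N)ᗮ := Submodule.orthogonal_le inf_le_left hu
  rw [Submodule.inf_orthogonal, Submodule.orthogonal_orthogonal_eq_closure] at huE
  have huAB := Submodule.topologicalClosure_sup_inf_orthogonal_le inf_le_left inf_le_right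
    ⟨huE, huL⟩
  rw [← SetLike.mem_coe, Submodule.topologicalClosure_coe] at huAB
  have hclosed : IsClosed {x : H | (1 - friedrichsCos M N ^ 2) * ⟪u, x⟫ ^ 2 ≤
      ‖(N ⊓ (M ⊓ N)ᗮ).starProjection u‖ ^ 2 * ‖x‖ ^ 2} :=
    isClosed_le (by fun_prop) (by fun_prop)
  have h : (1 - friedrichsCos M N ^ 2) * ⟪u, u⟫ ^ 2 ≤
      ‖(N ⊓ (M ⊓ N)ᗮ).starProjection u‖ ^ 2 * ‖u‖ ^ 2 :=
    closure_minimal (fun x hx => one_sub_friedrichsCos_sq_mul_inner_sq_le hu hx) hclosed huAB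
  simpa only [real_inner_self_eq_norm_sq, hu1, one_pow, mul_one] using h

theorem abs_inner_le_friedrichsCos_of_mem_orthogonal {M N : Submodule ℝ H}
    [(M ⊓ N).HasOrthogonalProjection] [(N ⊓ (M ⊓ N)ᗮ).HasOrthogonalProjection] {u v : H}
    (hu : u ∈ Mᗮ) (hv : v ∈ Nᗮ) (hu1 : ‖u‖ = 1) (hv1 : ‖v‖ = 1) (huE : u ∈ (Mᗮ ⊓ Nᗮ)ᗮ) :
    |⟪u, v⟫| ≤ friedrichsCos M N := by
  set B : Submodule ℝ H := N ⊓ (M ⊓ N)ᗮ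
  have hinner : ⟪u, v⟫ = ⟪Bᗮ.starProjection u, v⟫ := by
    rw [Submodule.starProjection_orthogonal_val, inner_sub_left,
      (Submodule.mem_orthogonal N v).1 hv _ (B.starProjection_apply_mem u).1, sub_zero]
  have hnorm : ‖Bᗮ.starProjection u‖ ^ 2 ≤ friedrichsCos M N ^ 2 := by
    have hpyth := Submodule.norm_sq_eq_add_norm_sq_starProjection u B
    have hB := one_sub_friedrichsCos_sq_le_norm_starProjection_sq hu hu1 huE
    rw [hu1] at hpyth
    linarith
  calc |⟪u, v⟫| ≤ ‖Bᗮ.starProjection u‖ := by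
        simpa [hinner, hv1] using abs_real_inner_le_norm (Bᗮ.starProjection u) v
    _ ≤ friedrichsCos M N := (pow_le_pow_iff_left₀ (norm_nonneg _) (friedrichsCos_nonneg M N)
        two_ne_zero).1 hnorm

theorem friedrichsCos_orthogonal_le {M N : Submodule ℝ H} (hM : IsClosed (M : Set H))
    (hN : IsClosed (N : Set H)) : friedrichsCos Mᗮ Nᗮ ≤ friedrichsCos M N := by
  have : CompleteSpace (M ⊓ N : Submodule ℝ H) := (hM.inter hN).completeSpace_coe
  have : CompleteSpace (N ⊓ (M ⊓ N)ᗮ : Submodule ℝ H) :=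
    (hN.inter (M ⊓ N).isClosed_orthogonal).completeSpace_coe
  exact Real.sSup_le (fun _ ⟨u, v, hu, hv, hu1, hv1, huE, _, hr⟩ =>
    hr ▸ abs_inner_le_friedrichsCos_of_mem_orthogonal hu hv hu1 hv1 huE)
    (friedrichsCos_nonneg M N)

end

theorem friedrichsCos_orthogonal_complements
    {H : Type*} [NormedAddCommGroup H] [InnerProductSpace ℝ H] [CompleteSpace H]
    (V₁ V₂ : Submodule ℝ H) (hV₁ : IsClosed (V₁ : Set H)) (hV₂ : IsClosed (V₂ : Set H)) :
    friedrichsCos V₁ᗮ V₂ᗮ = friedrichsCos V₁ V₂ := by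
  have : CompleteSpace V₁ := hV₁.completeSpace_coe
  have : CompleteSpace V₂ := hV₂.completeSpace_coe
  refine le_antisymm (friedrichsCos_orthogonal_le hV₁ hV₂) ?_
  simpa only [Submodule.orthogonal_orthogonal] using
    friedrichsCos_orthogonal_le V₁.isClosed_orthogonal V₂.isClosed_orthogonal
end

section
/- The point 2 lies in the point spectrum (is an eigenvalue) of Σ = S*S, where S : V₁ ⊕ V₂ → H is the addition operator, if and only if V₁ ∩ V₂ ≠ {0}. The eigenspace of Σ for eigenvalue 2 is { (v,v) : v ∈ V₁ ∩ V₂ } and the eigenspace for eigenvalue 0 contains { (v,−v) : v ∈ V₁ ∩ V₂ }. -/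
/-!
For `Σ = S† S` one has `⟪Σ p, p⟫ = ‖p₁ + p₂‖²`, and by the parallelogram law
`‖p₁ + p₂‖² ≤ 2 (‖p₁‖² + ‖p₂‖²) = 2 ‖p‖²` with equality only when `p₁ = p₂`. Hence `Σ p = 2 p`
forces `p₁ = p₂ ∈ V₁ ⊓ V₂`, while conversely `⟪S (v, v), S q⟫ = 2 ⟪(v, v), q⟫` for all `q`.
The vectors `(v, -v)` lie in `ker S = ker Σ`.
-/

open scoped RealInnerProductSpace

open ContinuousLinearMap Module.End

theorem eq_of_norm_add_sq_eq_two_mul {𝕜 E : Type*} [RCLike 𝕜] [NormedAddCommGroup E]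
    [InnerProductSpace 𝕜 E] {x y : E} (h : ‖x + y‖ ^ 2 = 2 * (‖x‖ ^ 2 + ‖y‖ ^ 2)) : x = y := by
  have h_sub : ‖x - y‖ ^ 2 = 0 := by linarith [parallelogram_law_with_norm 𝕜 x y]
  simpa [sub_eq_zero] using h_sub

section SumMap

variable {H : Type*} [NormedAddCommGroup H] [InnerProductSpace ℝ H] [CompleteSpace H]
  {V₁ V₂ : Submodule ℝ H} [CompleteSpace V₁] [CompleteSpace V₂]
  {S : WithLp 2 (V₁ × V₂) →L[ℝ] H}

theorem mem_eigenspace_two_iff_coe_fst_eq_coe_snd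
    (hS : ∀ p : WithLp 2 (V₁ × V₂), S p = (p.ofLp.1 : H) + (p.ofLp.2 : H))
    (p : WithLp 2 (V₁ × V₂)) :
    p ∈ eigenspace ((adjoint S ∘L S : WithLp 2 (V₁ × V₂) →L[ℝ] WithLp 2 (V₁ × V₂))
        : WithLp 2 (V₁ × V₂) →ₗ[ℝ] WithLp 2 (V₁ × V₂)) 2 ↔
      (p.ofLp.1 : H) = p.ofLp.2 := by
  rw [mem_eigenspace_iff]
  constructor
  · intro hp
    apply eq_of_norm_add_sq_eq_two_mul (𝕜 := ℝ)
    calc ‖(p.ofLp.1 : H) + p.ofLp.2‖ ^ 2 = ⟪(adjoint S ∘L S) p, p⟫ := by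
          rw [comp_apply, adjoint_inner_left, hS, real_inner_self_eq_norm_sq]
      _ = 2 * ‖p‖ ^ 2 := by
          rw [coe_coe] at hp
          rw [hp, real_inner_smul_left, real_inner_self_eq_norm_sq]
      _ = 2 * (‖(p.ofLp.1 : H)‖ ^ 2 + ‖(p.ofLp.2 : H)‖ ^ 2) := by
          rw [WithLp.prod_norm_sq_eq_of_L2]; rfl
  · intro hp
    refine ext_inner_right ℝ fun q => ?_
    rw [coe_coe, comp_apply, adjoint_inner_left, hS, hS, real_inner_smul_left,
      WithLp.prod_inner_apply, Submodule.coe_inner, Submodule.coe_inner, hp]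
    simp only [inner_add_left, inner_add_right]
    ring

theorem hasEigenvalue_two_iff_inf_ne_bot
    (hS : ∀ p : WithLp 2 (V₁ × V₂), S p = (p.ofLp.1 : H) + (p.ofLp.2 : H)) :
    HasEigenvalue ((adjoint S ∘L S : WithLp 2 (V₁ × V₂) →L[ℝ] WithLp 2 (V₁ × V₂))
        : WithLp 2 (V₁ × V₂) →ₗ[ℝ] WithLp 2 (V₁ × V₂)) 2 ↔ V₁ ⊓ V₂ ≠ ⊥ := by
  simp only [hasEigenvalue_iff, Submodule.ne_bot_iff, mem_eigenspace_two_iff_coe_fst_eq_coe_snd hS]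
  constructor
  · rintro ⟨p, hp, hp0⟩
    refine ⟨p.ofLp.1, ⟨p.ofLp.1.2, hp ▸ p.ofLp.2.2⟩, fun h0 => hp0 ?_⟩
    have h0' : (p.ofLp.2 : H) = 0 := hp ▸ h0
    apply WithLp.ofLp_injective
    ext <;> simp_all
  · rintro ⟨v, ⟨h₁, h₂⟩, hv⟩
    exact ⟨WithLp.toLp 2 (⟨v, h₁⟩, ⟨v, h₂⟩), rfl, fun h0 => hv congr(($h0).ofLp.1.1)⟩

end SumMap

theorem eigenvalue_two_iff_nontrivial_intersection_general
    {H : Type*} [NormedAddCommGroup H] [InnerProductSpace ℝ H] [CompleteSpace H]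
    (V₁ V₂ : Submodule ℝ H)
    [CompleteSpace V₁] [CompleteSpace V₂]
    (S : WithLp 2 (V₁ × V₂) →L[ℝ] H)
    (hS : ∀ p : WithLp 2 (V₁ × V₂), S p = (p.ofLp.1 : H) + (p.ofLp.2 : H)) :
    (Module.End.HasEigenvalue
        ((ContinuousLinearMap.adjoint S ∘L S : WithLp 2 (V₁ × V₂) →L[ℝ] WithLp 2 (V₁ × V₂))
          : WithLp 2 (V₁ × V₂) →ₗ[ℝ] WithLp 2 (V₁ × V₂)) 2 ↔ V₁ ⊓ V₂ ≠ ⊥) ∧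
    (∀ p : WithLp 2 (V₁ × V₂),
      p ∈ Module.End.eigenspace
        ((ContinuousLinearMap.adjoint S ∘L S : WithLp 2 (V₁ × V₂) →L[ℝ] WithLp 2 (V₁ × V₂))
          : WithLp 2 (V₁ × V₂) →ₗ[ℝ] WithLp 2 (V₁ × V₂)) 2 ↔
        ∃ v : H, ∃ h₁ : v ∈ V₁, ∃ h₂ : v ∈ V₂, (p.ofLp.1 : H) = v ∧ (p.ofLp.2 : H) = v) ∧
    (∀ v : H, ∀ h₁ : v ∈ V₁, ∀ h₂ : v ∈ V₂,
      WithLp.toLp 2 ((⟨v, h₁⟩, -⟨v, h₂⟩) : V₁ × V₂) ∈ Module.End.eigenspace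
        ((ContinuousLinearMap.adjoint S ∘L S : WithLp 2 (V₁ × V₂) →L[ℝ] WithLp 2 (V₁ × V₂))
          : WithLp 2 (V₁ × V₂) →ₗ[ℝ] WithLp 2 (V₁ × V₂)) 0) := by
  refine ⟨hasEigenvalue_two_iff_inf_ne_bot hS, fun p => ?_, fun v h₁ h₂ => ?_⟩
  · rw [mem_eigenspace_two_iff_coe_fst_eq_coe_snd hS]
    constructor
    · intro hp
      exact ⟨p.ofLp.1, p.ofLp.1.2, hp ▸ p.ofLp.2.2, rfl, hp.symm⟩
    · rintro ⟨v, -, -, hv₁, hv₂⟩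
      exact hv₁.trans hv₂.symm
  · rw [eigenspace_zero]
    change _ ∈ (adjoint S ∘L S).ker
    rw [ker_adjoint_comp_self, LinearMap.mem_ker, coe_coe, hS]
    simp

theorem eigenvalue_two_iff_nontrivial_intersection
    {H : Type*} [NormedAddCommGroup H] [InnerProductSpace ℝ H] [CompleteSpace H]
    (V₁ V₂ : Submodule ℝ H) (hV₁ : IsClosed (V₁ : Set H)) (hV₂ : IsClosed (V₂ : Set H))
    [CompleteSpace V₁] [CompleteSpace V₂]
    (S : WithLp 2 (V₁ × V₂) →L[ℝ] H)
    (hS : ∀ p : WithLp 2 (V₁ × V₂), S p = (p.ofLp.1 : H) + (p.ofLp.2 : H)) :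
    (Module.End.HasEigenvalue
        ((ContinuousLinearMap.adjoint S ∘L S : WithLp 2 (V₁ × V₂) →L[ℝ] WithLp 2 (V₁ × V₂))
          : WithLp 2 (V₁ × V₂) →ₗ[ℝ] WithLp 2 (V₁ × V₂)) 2 ↔ V₁ ⊓ V₂ ≠ ⊥) ∧
    (∀ p : WithLp 2 (V₁ × V₂),
      p ∈ Module.End.eigenspace
        ((ContinuousLinearMap.adjoint S ∘L S : WithLp 2 (V₁ × V₂) →L[ℝ] WithLp 2 (V₁ × V₂))
          : WithLp 2 (V₁ × V₂) →ₗ[ℝ] WithLp 2 (V₁ × V₂)) 2 ↔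
        ∃ v : H, ∃ h₁ : v ∈ V₁, ∃ h₂ : v ∈ V₂, (p.ofLp.1 : H) = v ∧ (p.ofLp.2 : H) = v) ∧
    (∀ v : H, ∀ h₁ : v ∈ V₁, ∀ h₂ : v ∈ V₂,
      WithLp.toLp 2 ((⟨v, h₁⟩, -⟨v, h₂⟩) : V₁ × V₂) ∈ Module.End.eigenspace
        ((ContinuousLinearMap.adjoint S ∘L S : WithLp 2 (V₁ × V₂) →L[ℝ] WithLp 2 (V₁ × V₂))
          : WithLp 2 (V₁ × V₂) →ₗ[ℝ] WithLp 2 (V₁ × V₂)) 0) :=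
  eigenvalue_two_iff_nontrivial_intersection_general V₁ V₂ S hS
end

section
/- Let V₁, V₂ be closed subspaces of a Hilbert space H with cos ∠(V₁,V₂) = ε < 1 (Friedrichs angle). For any w ∈ H, if d₀(w), d₁(w), d₂(w) denote the distances from w to V₁ ∩ V₂, V₁, V₂ respectively, then d₀(w)² ≤ (1/(1−ε)) (d₁(w)² + d₂(w)²). -/
open scoped RealInnerProductSpace

/-!
Let `Pᵢ` be the orthogonal projection onto `Vᵢ`, with `V₀ = V₁ ⊓ V₂`, and `u = w - P₀ w`.
Translating `w` by `P₀ w ∈ V₁ ⊓ V₂` changes none of the three distances, and `d₀(u) = ‖u‖`.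
The projections `x = P₁ u`, `y = P₂ u` stay orthogonal to `V₀`, so `⟪x, y⟫ ≤ ε ‖x‖ ‖y‖`,
whence `‖x + y‖² ≤ (1 + ε)(‖x‖² + ‖y‖²)`. Since `⟪u, x⟫ = ‖x‖²` and `⟪u, y⟫ = ‖y‖²`,
Cauchy–Schwarz applied to `⟪u, x + y⟫` gives `‖x‖² + ‖y‖² ≤ (1 + ε)‖u‖²`, and by Pythagoras
`d₁² + d₂² = 2‖u‖² - ‖x‖² - ‖y‖² ≥ (1 - ε)‖u‖²`.
-/

section

variable {H : Type*} [NormedAddCommGroup H] [InnerProductSpace ℝ H]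

namespace Submodule

variable (K : Submodule ℝ H) [K.HasOrthogonalProjection]

theorem infDist_eq_norm_sub_starProjection (w : H) :
    Metric.infDist w (K : Set H) = ‖w - K.starProjection w‖ := by
  rw [Metric.infDist_eq_iInf, starProjection_minimal]
  simp only [dist_eq_norm]
  rfl

theorem inner_self_starProjection (u : H) :
    ⟪u, K.starProjection u⟫ = ‖K.starProjection u‖ ^ 2 := by
  have h := K.starProjection_inner_eq_zero u (K.starProjection u) (K.starProjection_apply_mem u)
  rw [inner_sub_left, real_inner_self_eq_norm_sq] at h
  linarith

theorem norm_sub_starProjection_sq (u : H) :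
    ‖u - K.starProjection u‖ ^ 2 = ‖u‖ ^ 2 - ‖K.starProjection u‖ ^ 2 := by
  rw [norm_sub_sq_real, K.inner_self_starProjection]
  ring

theorem sub_starProjection_sub_of_mem {v : H} (hv : v ∈ K) (w : H) :
    w - v - K.starProjection (w - v) = w - K.starProjection w := by
  rw [map_sub, K.starProjection_eq_self_iff.mpr hv]
  abel

variable {K} in
theorem starProjection_mem_orthogonal_of_le_s8 {K₀ : Submodule ℝ H} (h : K₀ ≤ K)
    {u : H} (hu : u ∈ K₀ᗮ) : K.starProjection u ∈ K₀ᗮ := by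
  intro v hv
  rw [← K.inner_starProjection_left_eq_right, K.starProjection_eq_self_iff.mpr (h hv)]
  exact hu v hv

end Submodule

theorem abs_inner_le_friedrichsCos_mul_s8 {V₁ V₂ : Submodule ℝ H} {x y : H}
    (hx : x ∈ V₁) (hy : y ∈ V₂) (hx₀ : x ∈ (V₁ ⊓ V₂)ᗮ) (hy₀ : y ∈ (V₁ ⊓ V₂)ᗮ) :
    |⟪x, y⟫| ≤ friedrichsCos V₁ V₂ * (‖x‖ * ‖y‖) := by
  rcases eq_or_ne x 0 with rfl | hx0
  · simp
  rcases eq_or_ne y 0 with rfl | hy0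
  · simp
  have hbdd : BddAbove {r : ℝ | ∃ v₁ v₂ : H, v₁ ∈ V₁ ∧ v₂ ∈ V₂ ∧ ‖v₁‖ = 1 ∧ ‖v₂‖ = 1 ∧
      v₁ ∈ (V₁ ⊓ V₂)ᗮ ∧ v₂ ∈ (V₁ ⊓ V₂)ᗮ ∧ r = |⟪v₁, v₂⟫|} := by
    refine ⟨1, ?_⟩
    rintro _ ⟨v₁, v₂, -, -, h₁, h₂, -, -, rfl⟩
    simpa [h₁, h₂] using abs_real_inner_le_norm v₁ v₂
  have hunit : |⟪‖x‖⁻¹ • x, ‖y‖⁻¹ • y⟫| ≤ friedrichsCos V₁ V₂ :=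
    le_csSup hbdd ⟨_, _, V₁.smul_mem _ hx, V₂.smul_mem _ hy, norm_smul_inv_norm hx0,
      norm_smul_inv_norm hy0, Submodule.smul_mem _ _ hx₀, Submodule.smul_mem _ _ hy₀, rfl⟩
  have hpos : 0 < ‖x‖ * ‖y‖ := by positivity
  rw [real_inner_smul_left, real_inner_smul_right, ← mul_assoc, ← mul_inv, abs_mul,
    abs_inv, abs_of_pos hpos, inv_mul_le_iff₀ hpos] at hunit
  linarith

theorem norm_add_sq_le_of_inner_le {ε : ℝ} (hε : 0 ≤ ε) {x y : H}
    (h : ⟪x, y⟫ ≤ ε * (‖x‖ * ‖y‖)) : ‖x + y‖ ^ 2 ≤ (1 + ε) * (‖x‖ ^ 2 + ‖y‖ ^ 2) := by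
  have hamgm : 2 * ‖x‖ * ‖y‖ ≤ ‖x‖ ^ 2 + ‖y‖ ^ 2 := two_mul_le_add_sq _ _
  rw [norm_add_sq_real]
  nlinarith

theorem norm_sq_add_norm_sq_le_of_inner_eq {c : ℝ} (hc : 0 ≤ c) {u x y : H}
    (hx : ⟪u, x⟫ = ‖x‖ ^ 2) (hy : ⟪u, y⟫ = ‖y‖ ^ 2)
    (hxy : ‖x + y‖ ^ 2 ≤ c * (‖x‖ ^ 2 + ‖y‖ ^ 2)) :
    ‖x‖ ^ 2 + ‖y‖ ^ 2 ≤ c * ‖u‖ ^ 2 := by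
  set s := ‖x‖ ^ 2 + ‖y‖ ^ 2
  rcases (by positivity : 0 ≤ s).eq_or_lt with hs | hs
  · rw [← hs]; positivity
  have hcs : s ≤ ‖u‖ * ‖x + y‖ := by
    rw [show s = ⟪u, x + y⟫ by rw [inner_add_right, hx, hy]]
    exact real_inner_le_norm u (x + y)
  have hcs_sq : s ^ 2 ≤ ‖u‖ ^ 2 * ‖x + y‖ ^ 2 := by
    rw [← mul_pow]
    exact pow_le_pow_left₀ hs.le hcs 2
  have : s * s ≤ s * (c * ‖u‖ ^ 2) := by
    nlinarith [mul_le_mul_of_nonneg_left hxy (sq_nonneg ‖u‖)]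
  exact le_of_mul_le_mul_left this hs

theorem one_sub_friedrichsCos_mul_norm_sq_le {V₁ V₂ : Submodule ℝ H}
    [V₁.HasOrthogonalProjection] [V₂.HasOrthogonalProjection] {u : H} (hu : u ∈ (V₁ ⊓ V₂)ᗮ) :
    (1 - friedrichsCos V₁ V₂) * ‖u‖ ^ 2 ≤
      ‖u - V₁.starProjection u‖ ^ 2 + ‖u - V₂.starProjection u‖ ^ 2 := by
  set x := V₁.starProjection u
  set y := V₂.starProjection u
  have hangle : ⟪x, y⟫ ≤ friedrichsCos V₁ V₂ * (‖x‖ * ‖y‖) :=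
    (le_abs_self _).trans <| abs_inner_le_friedrichsCos_mul_s8 (V₁.starProjection_apply_mem u)
      (V₂.starProjection_apply_mem u) (Submodule.starProjection_mem_orthogonal_of_le_s8 inf_le_left hu)
      (Submodule.starProjection_mem_orthogonal_of_le_s8 inf_le_right hu)
  have hε := friedrichsCos_nonneg V₁ V₂
  have hsum : ‖x‖ ^ 2 + ‖y‖ ^ 2 ≤ (1 + friedrichsCos V₁ V₂) * ‖u‖ ^ 2 :=
    norm_sq_add_norm_sq_le_of_inner_eq (by linarith) (V₁.inner_self_starProjection u)
      (V₂.inner_self_starProjection u) (norm_add_sq_le_of_inner_le hε hangle)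
  rw [V₁.norm_sub_starProjection_sq, V₂.norm_sub_starProjection_sq]
  linarith

end

theorem dist_inter_sq_le
    {H : Type*} [NormedAddCommGroup H] [InnerProductSpace ℝ H] [CompleteSpace H]
    (V₁ V₂ : Submodule ℝ H) (hV₁ : IsClosed (V₁ : Set H)) (hV₂ : IsClosed (V₂ : Set H))
    (hε : friedrichsCos V₁ V₂ < 1) (w : H) :
    Metric.infDist w ((V₁ ⊓ V₂ : Submodule ℝ H) : Set H) ^ 2 ≤
      (1 / (1 - friedrichsCos V₁ V₂)) *
        (Metric.infDist w (V₁ : Set H) ^ 2 + Metric.infDist w (V₂ : Set H) ^ 2) := by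
  have : CompleteSpace V₁ := hV₁.completeSpace_coe
  have : CompleteSpace V₂ := hV₂.completeSpace_coe
  have : CompleteSpace (V₁ ⊓ V₂ : Submodule ℝ H) := (hV₁.inter hV₂).completeSpace_coe
  have hp : (V₁ ⊓ V₂).starProjection w ∈ V₁ ⊓ V₂ := (V₁ ⊓ V₂).starProjection_apply_mem w
  simp only [Submodule.infDist_eq_norm_sub_starProjection]
  rw [← V₁.sub_starProjection_sub_of_mem hp.1, ← V₂.sub_starProjection_sub_of_mem hp.2,
    one_div_mul_eq_div, le_div_iff₀ (sub_pos.mpr hε), mul_comm]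
  exact one_sub_friedrichsCos_mul_norm_sq_le ((V₁ ⊓ V₂).sub_starProjection_mem_orthogonal w)
end

section
/- For the n×n tridiagonal matrix A with 1 on the diagonal and −1/2 on the adjacent off-diagonals, let 𝟙 be the all-ones column vector. Then 𝟙ᵀ A⁻¹ 𝟙 = (n³ + 3n² + 2n)/6 = n(n+1)(n+2)/6. -/
/-!
Applied to a vector padded by zeros, `A` is minus half the discrete second difference with
Dirichlet conditions at `0` and `n + 1`. The parabola `x k = k (n + 1 - k)` vanishes at both ends
and has second difference `-2`, so `A x = 𝟙` and `𝟙ᵀ A⁻¹ 𝟙 = ∑ x`, a cubic in `n`. `A` is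
invertible because a solution of `A v = 0` has vanishing second differences, hence is linear, and
a linear sequence vanishing at `0` and `n + 1` is zero.
-/

open Matrix Finset

noncomputable def halfDirichletLaplacian (n : ℕ) : Matrix (Fin n) (Fin n) ℝ :=
  Matrix.of fun i j =>
    if i = j then 1 else if (i : ℕ) + 1 = (j : ℕ) ∨ (j : ℕ) + 1 = (i : ℕ) then -(1/2) else 0

/-- The index is shifted by one: `padZero v (k + 1) = v k`, and the boundary values
`padZero v 0` and `padZero v (n + 1)` are `0`. -/
def padZero {α : Type*} [Zero α] {n : ℕ} (v : Fin n → α) : ℕ → α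
  | 0 => 0
  | k + 1 => if h : k < n then v ⟨k, h⟩ else 0

section padZero

variable {α : Type*} {n : ℕ}

theorem padZero_eq_sum [AddCommMonoid α] (v : Fin n → α) (k : ℕ) :
    padZero v k = ∑ j : Fin n, if (j : ℕ) + 1 = k then v j else 0 := by
  cases k with
  | zero => simp [padZero]
  | succ k =>
    simp only [padZero, Nat.add_right_cancel_iff]
    split_ifs with hk
    · rw [Fintype.sum_eq_single ⟨k, hk⟩ fun j hj => if_neg fun h => hj (Fin.ext h)]
      simp
    · exact (Fintype.sum_eq_zero _ fun j => if_neg (by omega)).symm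

theorem padZero_val_succ [Zero α] (v : Fin n → α) (i : Fin n) : padZero v (i + 1) = v i := by
  simp [padZero]

theorem padZero_comp_succ [Zero α] {f : ℕ → α} (h0 : f 0 = 0) (hn : f (n + 1) = 0) {k : ℕ}
    (hk : k ≤ n + 1) : padZero (fun i : Fin n => f (i + 1)) k = f k := by
  rcases k with _ | k
  · exact h0.symm
  · simp only [padZero]
    split_ifs with h
    · rfl
    · rw [show k = n by omega, hn]

end padZero

theorem halfDirichletLaplacian_mulVec_apply {n : ℕ} (v : Fin n → ℝ) (i : Fin n) :
    (halfDirichletLaplacian n *ᵥ v) i =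
      padZero v (i + 1) - (padZero v i + padZero v (i + 2)) / 2 := by
  simp only [padZero_eq_sum, mulVec, dotProduct, halfDirichletLaplacian, of_apply]
  rw [← sum_add_distrib, sum_div, ← sum_sub_distrib]
  refine Fintype.sum_congr _ _ fun j => ?_
  simp only [Fin.ext_iff]
  split_ifs <;> first | ring1 | omega

theorem eq_mul_of_secondDiff_eq_zero {R : Type*} [CommRing R] {u : ℕ → R} {n : ℕ}
    (h0 : u 0 = 0) (h : ∀ k < n, u (k + 2) - 2 * u (k + 1) + u k = 0) {k : ℕ}
    (hk : k ≤ n + 1) : u k = k * u 1 := by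
  induction k using Nat.strong_induction_on with
  | _ k ih =>
    match k, hk with
    | 0, _ => simp [h0]
    | 1, _ => simp
    | k + 2, hk =>
      have hk1 := ih (k + 1) (by omega) (by omega)
      have hk0 := ih k (by omega) (by omega)
      push_cast at hk1 ⊢
      linear_combination h k (by omega) + 2 * hk1 - hk0

theorem halfDirichletLaplacian_det_ne_zero (n : ℕ) : (halfDirichletLaplacian n).det ≠ 0 := by
  rw [Ne, ← exists_mulVec_eq_zero_iff]
  rintro ⟨v, hv0, hv⟩
  have hdiff : ∀ k < n, padZero v (k + 2) - 2 * padZero v (k + 1) + padZero v k = 0 := by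
    intro k hk
    have := congrFun hv ⟨k, hk⟩
    rw [halfDirichletLaplacian_mulVec_apply, Pi.zero_apply] at this
    linarith
  have hlin {k : ℕ} (hk : k ≤ n + 1) : padZero v k = k * padZero v 1 :=
    eq_mul_of_secondDiff_eq_zero rfl hdiff hk
  have h1 : padZero v 1 = 0 := by
    have hend := hlin le_rfl
    simp only [padZero, lt_irrefl, dite_false] at hend
    exact (mul_eq_zero.1 hend.symm).resolve_left (by positivity)
  refine hv0 (funext fun i => ?_)
  rw [← padZero_val_succ v i, hlin (by omega), h1, mul_zero, Pi.zero_apply]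

theorem halfDirichletLaplacian_mulVec_parabola (n : ℕ) :
    halfDirichletLaplacian n *ᵥ (fun i : Fin n => ((i : ℝ) + 1) * (n - i)) = fun _ => 1 := by
  set f : ℕ → ℝ := fun k => k * (n + 1 - k)
  have hx : (fun i : Fin n => ((i : ℝ) + 1) * (n - i)) = fun i : Fin n => f (i + 1) := by
    ext i
    simp only [f]
    push_cast
    ring
  have h0 : f 0 = 0 := by simp [f]
  have hn : f (n + 1) = 0 := by simp [f]
  ext i
  rw [hx, halfDirichletLaplacian_mulVec_apply, padZero_comp_succ h0 hn (by omega),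
    padZero_comp_succ h0 hn (by omega), padZero_comp_succ h0 hn (by omega)]
  simp only [f]
  push_cast
  ring

theorem sum_range_succ_mul_sub (n : ℕ) (m : ℝ) :
    ∑ i ∈ range n, ((i : ℝ) + 1) * (m - i) = n * (n + 1) * (3 * m - 2 * n + 2) / 6 := by
  induction n with
  | zero => simp
  | succ n ih =>
    rw [sum_range_succ, ih]
    push_cast
    ring

theorem tridiagonal_ones_quadratic_form
    (n : ℕ) (A : Matrix (Fin n) (Fin n) ℝ)
    (hA : ∀ i j : Fin n, A i j =
      if i = j then 1 else if (i : ℕ) + 1 = (j : ℕ) ∨ (j : ℕ) + 1 = (i : ℕ) then -(1/2) else 0) :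
    dotProduct (fun _ => (1:ℝ)) (A⁻¹.mulVec fun _ => (1:ℝ)) =
      ((n : ℝ) ^ 3 + 3 * (n : ℝ) ^ 2 + 2 * (n : ℝ)) / 6 := by
  obtain rfl : A = halfDirichletLaplacian n := Matrix.ext hA
  have hunit := (halfDirichletLaplacian_det_ne_zero n).isUnit
  have hsol : (halfDirichletLaplacian n)⁻¹ *ᵥ (fun _ => 1) =
      fun i : Fin n => ((i : ℝ) + 1) * (n - i) := by
    rw [← halfDirichletLaplacian_mulVec_parabola n, mulVec_mulVec, nonsing_inv_mul _ hunit,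
      one_mulVec]
  rw [hsol]
  simp only [dotProduct, one_mul]
  rw [Fin.sum_univ_eq_sum_range (fun i => ((i : ℝ) + 1) * (n - i)), sum_range_succ_mul_sub]
  ring
end
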